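/- arXiv:1911.00555 — 9 statements merged into one kernel-verified Lean document; each statement's English description precedes it below -/
import Mathlib

section
/- Let G be a group such that the center of its power graph 𝒢(G) (the set of vertices adjacent to every other vertex) has more than one element. Then either G is isomorphic to the infinite cyclic group (ℤ,+), or every element of G has finite order. -/
set_option linter.unusedVariables false

/-- The power graph of a group: distinct `x, y` adjacent iff one is an integer power of the other. -/
def powerGraph (G : Type*) [Group G] : SimpleGraph G where
  Adj x y := x ≠ y ∧ ∃ n : ℤ, y = x ^ n ∨ x = y ^ n
  symm := ⟨fun x y ⟨hxy, n, h⟩ => ⟨hxy.symm, n, h.symm⟩⟩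
  loopless := ⟨fun x ⟨h, _⟩ => h rfl⟩

/-- The Z±-power graph of a group: distinct `x, y` adjacent iff one is a nonzero integer power
of the other. -/
def zpmPowerGraph (G : Type*) [Group G] : SimpleGraph G where
  Adj x y := x ≠ y ∧ ∃ n : ℤ, n ≠ 0 ∧ (y = x ^ n ∨ x = y ^ n)
  symm := ⟨fun x y ⟨hxy, n, hn, h⟩ => ⟨hxy.symm, n, hn, h.symm⟩⟩
  loopless := ⟨fun x ⟨h, _⟩ => h rfl⟩

/-- The N-power graph of a group: distinct `x, y` adjacent iff one is a positive-integer power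
of the other. -/
def nPowerGraph (G : Type*) [Group G] : SimpleGraph G where
  Adj x y := x ≠ y ∧ ∃ n : ℕ, 0 < n ∧ (y = x ^ n ∨ x = y ^ n)
  symm := ⟨fun x y ⟨hxy, n, hn, h⟩ => ⟨hxy.symm, n, hn, h.symm⟩⟩
  loopless := ⟨fun x ⟨h, _⟩ => h rfl⟩

/-- The closed neighborhood of a vertex in a graph. -/
def closedNbhd {V : Type*} (Γ : SimpleGraph V) (x : V) : Set V :=
  insert x {y | Γ.Adj x y}

/-- The center of a graph: the set of vertices adjacent to every other vertex. -/
def graphCenter {V : Type*} (Γ : SimpleGraph V) : Set V :=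
  {x | ∀ y, y ≠ x → Γ.Adj x y}

/-!
Let `z ≠ 1` be a vertex of the power graph adjacent to all others. If some element has infinite
order, adjacency to `z` forces `z` to have infinite order. For `w ∉ ⟨z⟩` adjacency gives
`z = w ^ n`; as `w * z = w ^ (n + 1)` also lies outside `⟨z⟩`, we get `z = w ^ ((n + 1) * m)`, hence
`n = (n + 1) * m`, so `n + 1 ∣ 1` and `n = -2`. Applying this to `w` and `w⁻¹` gives
`z = w ^ (-2) = z⁻¹`, which is impossible. So `z` generates `G`, an infinite cyclic group.
-/

open Subgroup

lemma Int.eq_neg_two_of_eq_add_one_mul {n m : ℤ} (hn : n ≠ 0) (h : n = (n + 1) * m) : n = -2 := by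
  have hunit : (n + 1) * (1 - m) = 1 := by linear_combination h
  rcases Int.eq_one_or_neg_one_of_mul_eq_one hunit with h1 | h1 <;> omega

lemma IsOfFinOrder.of_zpow {G : Type*} [Group G] {x : G} {n : ℤ} (h : IsOfFinOrder (x ^ n))
    (hn : n ≠ 0) : IsOfFinOrder x := by
  obtain ⟨k, hk, hxk⟩ := isOfFinOrder_iff_pow_eq_one.mp h
  refine isOfFinOrder_iff_zpow_eq_one.mpr ⟨n * k, by positivity, ?_⟩
  rw [zpow_mul, zpow_natCast, hxk]

section PowerGraphCenter

variable {G : Type*} [Group G] {z : G}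

lemma exists_zpow_eq_of_mem_graphCenter (hz : z ∈ graphCenter (powerGraph G)) {y : G}
    (hy : y ≠ z) : ∃ n : ℤ, y = z ^ n ∨ z = y ^ n :=
  (hz y hy).2

lemma exists_eq_zpow_of_mem_graphCenter_of_notMem_zpowers (hz : z ∈ graphCenter (powerGraph G))
    {w : G} (hw : w ∉ zpowers z) : ∃ n : ℤ, z = w ^ n := by
  have hwz : w ≠ z := fun h => hw (h ▸ mem_zpowers w)
  obtain ⟨n, hwn | hzn⟩ := exists_zpow_eq_of_mem_graphCenter hz hwz
  · exact absurd ⟨n, hwn.symm⟩ hw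
  · exact ⟨n, hzn⟩

lemma not_isOfFinOrder_of_mem_graphCenter (hz : z ∈ graphCenter (powerGraph G)) (hz1 : z ≠ 1)
    {x : G} (hx : ¬IsOfFinOrder x) : ¬IsOfFinOrder z := by
  intro hzfin
  by_cases hxz : x = z
  · exact hx (hxz ▸ hzfin)
  obtain ⟨n, hxn | hzn⟩ := exists_zpow_eq_of_mem_graphCenter hz hxz
  · exact hx (hxn ▸ hzfin.zpow)
  · have hn : n ≠ 0 := by rintro rfl; exact hz1 (by rwa [zpow_zero] at hzn)
    exact hx ((hzn ▸ hzfin).of_zpow hn)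

lemma eq_zpow_neg_two_of_mem_graphCenter_of_notMem_zpowers
    (hz : z ∈ graphCenter (powerGraph G)) (hzinf : ¬IsOfFinOrder z) {w : G}
    (hw : w ∉ zpowers z) : z = w ^ (-2 : ℤ) := by
  obtain ⟨n, hzn⟩ := exists_eq_zpow_of_mem_graphCenter_of_notMem_zpowers hz hw
  have hwz : w * z ∉ zpowers z :=
    fun h => hw ((Subgroup.mul_mem_cancel_right _ (mem_zpowers z)).mp h)
  obtain ⟨m, hzm⟩ := exists_eq_zpow_of_mem_graphCenter_of_notMem_zpowers hz hwz
  have hwinf : ¬IsOfFinOrder w := fun h => hzinf (hzn ▸ h.zpow)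
  have hn : n ≠ 0 := by rintro rfl; exact hzinf (by rw [hzn, zpow_zero]; exact .one)
  have hnm : n = (n + 1) * m := by
    refine injective_zpow_iff_not_isOfFinOrder.mpr hwinf ?_
    calc w ^ n = (w * z) ^ m := hzn.symm.trans hzm
      _ = w ^ ((n + 1) * m) := by rw [hzn, ← zpow_one_add, add_comm, zpow_mul]
  rw [hzn, Int.eq_neg_two_of_eq_add_one_mul hn hnm]

lemma zpowers_eq_top_of_mem_graphCenter (hz : z ∈ graphCenter (powerGraph G))
    (hzinf : ¬IsOfFinOrder z) : zpowers z = ⊤ := by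
  refine eq_top_iff.mpr fun w _ => ?_
  by_contra hw
  have hw' : w⁻¹ ∉ zpowers z := by rwa [inv_mem_iff]
  have hzw := eq_zpow_neg_two_of_mem_graphCenter_of_notMem_zpowers hz hzinf hw
  have hzw' : z = w ^ (2 : ℤ) := by
    rw [eq_zpow_neg_two_of_mem_graphCenter_of_notMem_zpowers hz hzinf hw', inv_zpow', neg_neg]
  refine hzinf (isOfFinOrder_iff_zpow_eq_one.mpr ⟨2, two_ne_zero, ?_⟩)
  calc z ^ (2 : ℤ) = w ^ (2 : ℤ) * w ^ (-2 : ℤ) := by rw [zpow_two, ← hzw, ← hzw']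
    _ = 1 := by rw [← zpow_add, add_neg_cancel, zpow_zero]

end PowerGraphCenter

/-- If the center of the power graph of a group `G` has more than one element, then either
`G ≅ (ℤ,+)` or every element of `G` has finite order. -/
theorem center_big_imp_infinite_cyclic_or_torsion {G : Type*} [Group G]
    (h : (graphCenter (powerGraph G)).Nontrivial) :
    Nonempty (G ≃* Multiplicative ℤ) ∨ ∀ x : G, IsOfFinOrder x := by
  refine or_iff_not_imp_right.mpr fun htor => ?_
  obtain ⟨x, hx⟩ := not_forall.mp htor
  obtain ⟨z, hz, hz1⟩ := h.exists_ne 1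
  have hzinf := not_isOfFinOrder_of_mem_graphCenter hz hz1 hx
  have : Infinite G := (infinite_zpowers.mpr hzinf).to_subtype.of_injective _ Subtype.val_injective
  exact ⟨(intEquivOfZPowersEqTop z (zpowers_eq_top_of_mem_graphCenter hz hzinf)).symm⟩
end

section
/- Let G be a group and let x ∈ G be an element of infinite order. Then x and x⁻¹ lie in different connected components of the N-power graph 𝒢⁺(G). -/
set_option linter.unusedVariables false

/-!
Call `a` and `b` commensurable when `a ^ p = b ^ q` for some positive `p` and `q`. This is an
equivalence relation containing the adjacency of the N-power graph, so it holds between any two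
vertices of the same component. But `x` and `x⁻¹` are commensurable only if
`x ^ p = x⁻¹ ^ q`, which gives `x ^ (p + q) = 1`.
-/

def PowCommensurable {M : Type*} [Monoid M] (a b : M) : Prop :=
  ∃ p q : ℕ, 0 < p ∧ 0 < q ∧ a ^ p = b ^ q

namespace PowCommensurable

variable {M : Type*} [Monoid M] {a b c : M}

theorem refl (a : M) : PowCommensurable a a :=
  ⟨1, 1, one_pos, one_pos, rfl⟩

theorem of_pow_eq {n : ℕ} (hn : 0 < n) (h : b = a ^ n) : PowCommensurable a b :=
  ⟨n, 1, hn, one_pos, by rw [h, pow_one]⟩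

theorem symm : PowCommensurable a b → PowCommensurable b a
  | ⟨p, q, hp, hq, h⟩ => ⟨q, p, hq, hp, h.symm⟩

theorem trans : PowCommensurable a b → PowCommensurable b c → PowCommensurable a c
  | ⟨p, q, hp, hq, hab⟩, ⟨r, s, hr, hs, hbc⟩ =>
    ⟨p * r, s * q, Nat.mul_pos hp hr, Nat.mul_pos hs hq, by
      rw [pow_mul, hab, ← pow_mul, mul_comm, pow_mul, hbc, ← pow_mul]⟩

end PowCommensurable

theorem isOfFinOrder_of_powCommensurable_inv {G : Type*} [Group G] {x : G}
    (h : PowCommensurable x x⁻¹) : IsOfFinOrder x := by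
  obtain ⟨p, q, hp, hq, hpq⟩ := h
  refine isOfFinOrder_iff_pow_eq_one.mpr ⟨p + q, by positivity, ?_⟩
  rw [pow_add, hpq, inv_pow, inv_mul_cancel]

namespace nPowerGraph

variable {G : Type*} [Group G] {a b : G}

theorem powCommensurable_of_adj (h : (nPowerGraph G).Adj a b) : PowCommensurable a b := by
  obtain ⟨-, n, hn, hba | hab⟩ := h
  · exact .of_pow_eq hn hba
  · exact (PowCommensurable.of_pow_eq hn hab).symm

theorem powCommensurable_of_reachable (h : (nPowerGraph G).Reachable a b) :
    PowCommensurable a b := by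
  rw [SimpleGraph.reachable_iff_reflTransGen] at h
  induction h with
  | refl => exact .refl a
  | tail _ hadj ih => exact ih.trans (powCommensurable_of_adj hadj)

end nPowerGraph

/-- If `x` has infinite order, then `x` and `x⁻¹` lie in different connected components of the
N-power graph. -/
theorem inv_not_in_same_component_nPowerGraph {G : Type*} [Group G] (x : G)
    (hx : ¬ IsOfFinOrder x) :
    (nPowerGraph G).connectedComponentMk x ≠ (nPowerGraph G).connectedComponentMk x⁻¹ :=
  fun h => hx <| isOfFinOrder_of_powCommensurable_inv <|
    nPowerGraph.powCommensurable_of_reachable (SimpleGraph.ConnectedComponent.exact h)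
end

section
/- Let G be a group and let x ∈ G be an element of infinite order. Define S̄(x) = { y ∈ G : ∃ n, m ∈ ℕ with n, m ≥ 1 and y^m = x^n }. Then S̄(x) is the vertex set of a connected component of the N-power graph 𝒢⁺(G), and x⁻¹ ∉ S̄(x). -/
set_option linter.unusedVariables false

theorem SimpleGraph.Reachable.mem_of_adj_closed {V : Type*} {Γ : SimpleGraph V} {S : Set V}
    (hS : ∀ ⦃a b⦄, a ∈ S → Γ.Adj a b → b ∈ S) {u v : V} (huv : Γ.Reachable u v) (hu : u ∈ S) :
    v ∈ S := by
  rw [SimpleGraph.reachable_iff_reflTransGen] at huv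
  induction huv with
  | refl => exact hu
  | tail _ hbc ih => exact hS ih hbc

section NPowerGraph

variable {G : Type*} [Group G]

theorem nPowerGraph_reachable_pow (y : G) {m : ℕ} (hm : 0 < m) :
    (nPowerGraph G).Reachable y (y ^ m) := by
  by_cases he : y = y ^ m
  · rw [← he]
  · exact SimpleGraph.Adj.reachable ⟨he, m, hm, Or.inl rfl⟩

/-- The set `S̄(x)` of the paper. -/
def posRatPowers (x : G) : Set G :=
  {y | ∃ n m : ℕ, 1 ≤ n ∧ 1 ≤ m ∧ y ^ m = x ^ n}

theorem self_mem_posRatPowers (x : G) : x ∈ posRatPowers x :=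
  ⟨1, 1, le_rfl, le_rfl, rfl⟩

theorem mem_posRatPowers_of_adj {x a b : G} (ha : a ∈ posRatPowers x)
    (hab : (nPowerGraph G).Adj a b) : b ∈ posRatPowers x := by
  obtain ⟨n, m, hn, hm, hax⟩ := ha
  obtain ⟨-, k, hk, hb | ha⟩ := hab
  · refine ⟨n * k, m, Nat.mul_pos hn hk, hm, ?_⟩
    rw [hb, ← pow_mul, mul_comm k m, pow_mul, hax, ← pow_mul]
  · refine ⟨n, k * m, hn, Nat.mul_pos hk hm, ?_⟩
    rw [pow_mul, ← ha, hax]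

theorem reachable_iff_mem_posRatPowers {x y : G} :
    (nPowerGraph G).Reachable x y ↔ y ∈ posRatPowers x := by
  refine ⟨fun h => h.mem_of_adj_closed (fun _ _ => mem_posRatPowers_of_adj)
    (self_mem_posRatPowers x), ?_⟩
  rintro ⟨n, m, hn, hm, hyx⟩
  have hy := nPowerGraph_reachable_pow y hm
  rw [hyx] at hy
  exact (nPowerGraph_reachable_pow x hn).trans hy.symm

theorem posRatPowers_eq_supp (x : G) :
    posRatPowers x = ((nPowerGraph G).connectedComponentMk x).supp := by
  ext y
  rw [SimpleGraph.ConnectedComponent.mem_supp_iff, SimpleGraph.ConnectedComponent.eq,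
    SimpleGraph.reachable_comm, reachable_iff_mem_posRatPowers]

theorem inv_notMem_posRatPowers {x : G} (hx : ¬IsOfFinOrder x) : x⁻¹ ∉ posRatPowers x := by
  rintro ⟨n, m, hn, hm, h⟩
  refine hx (isOfFinOrder_iff_pow_eq_one.mpr ⟨n + m, by omega, ?_⟩)
  rw [pow_add, ← h, inv_pow, inv_mul_cancel]

end NPowerGraph

/-- For `x` of infinite order, the set `S̄(x) = {y | ∃ n m ≥ 1, y ^ m = x ^ n}` is the vertex set
of a connected component of the N-power graph (namely, that of `x`), and `x⁻¹ ∉ S̄(x)`. -/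
theorem sbar_is_component_and_inv_not_mem {G : Type*} [Group G] (x : G)
    (hx : ¬ IsOfFinOrder x) :
    {y : G | ∃ n m : ℕ, 1 ≤ n ∧ 1 ≤ m ∧ y ^ m = x ^ n} =
        ((nPowerGraph G).connectedComponentMk x).supp ∧
      x⁻¹ ∉ {y : G | ∃ n m : ℕ, 1 ≤ n ∧ 1 ≤ m ∧ y ^ m = x ^ n} :=
  ⟨posRatPowers_eq_supp x, inv_notMem_posRatPowers hx⟩
end

section
/- Let G be a group and let Φ be a connected component of the Z±-power graph 𝒢±(G) that contains an element of infinite order, and let x be an element of infinite order in Φ. Let Ψ be the connected component of the N-power graph 𝒢⁺(G) containing x. Then Φ is isomorphic to the strong product Ψ ⊠ P₂, where P₂ is the path (complete graph) on two vertices. -/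
set_option linter.unusedVariables false

/-- The strong product of two simple graphs. -/
def strongProd {α β : Type*} (Γ : SimpleGraph α) (Δ : SimpleGraph β) :
    SimpleGraph (α × β) where
  Adj p q := (p.1 = q.1 ∧ Δ.Adj p.2 q.2) ∨ (Γ.Adj p.1 q.1 ∧ p.2 = q.2) ∨
    (Γ.Adj p.1 q.1 ∧ Δ.Adj p.2 q.2)
  symm := by
    refine ⟨?_⟩
    rintro p q (⟨h1, h2⟩ | ⟨h1, h2⟩ | ⟨h1, h2⟩)
    · exact Or.inl ⟨h1.symm, h2.symm⟩
    · exact Or.inr (Or.inl ⟨h1.symm, h2.symm⟩)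
    · exact Or.inr (Or.inr ⟨h1.symm, h2.symm⟩)
  loopless := by
    refine ⟨?_⟩
    rintro p (⟨h1, h2⟩ | ⟨h1, h2⟩ | ⟨h1, h2⟩)
    · exact Δ.loopless.irrefl _ h2
    · exact Γ.loopless.irrefl _ h1
    · exact Γ.loopless.irrefl _ h1

/-! Every element `a` of the N-component `Ψ` of `x` is commensurable with `x` (`a ^ m = x ^ n`
with `m, n > 0`). Hence if `x` has infinite order, `Ψ` is disjoint from `Ψ⁻¹`, for otherwise `x`
would be commensurable with `x⁻¹`. A Z±-edge `a — b` means that `b` or `b⁻¹` is `a` or an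
N-neighbour of `a`, so the Z±-component of `x` is `Ψ ∪ Ψ⁻¹`, and for `a, b ∈ Ψ` the elements `a^{±1}, b^{±1}` are
Z±-adjacent iff they are distinct and `a, b` are equal or N-adjacent: this is adjacency of
`(a, ±), (b, ±)` in `Ψ ⊠ K₂`. -/

open SimpleGraph

section PowerRelations

variable {G : Type*} [Group G] {a b : G}

def PowRelated (a b : G) : Prop := ∃ n : ℕ, 0 < n ∧ (b = a ^ n ∨ a = b ^ n)

def ZPowRelated (a b : G) : Prop := ∃ n : ℤ, n ≠ 0 ∧ (b = a ^ n ∨ a = b ^ n)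

theorem zpmPowerGraph_adj_iff : (zpmPowerGraph G).Adj a b ↔ a ≠ b ∧ ZPowRelated a b := Iff.rfl

theorem powRelated_iff_eq_or_adj : PowRelated a b ↔ a = b ∨ (nPowerGraph G).Adj a b := by
  refine ⟨fun h => ?_, ?_⟩
  · by_cases hab : a = b
    exacts [.inl hab, .inr ⟨hab, h⟩]
  · rintro (rfl | h)
    exacts [⟨1, one_pos, .inl (pow_one a).symm⟩, h.2]

theorem PowRelated.inv (h : PowRelated a b) : PowRelated a⁻¹ b⁻¹ := by
  obtain ⟨n, hn, rfl | rfl⟩ := h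
  exacts [⟨n, hn, .inl (inv_pow a n).symm⟩, ⟨n, hn, .inr (inv_pow b n).symm⟩]

theorem PowRelated.zPowRelated (h : PowRelated a b) : ZPowRelated a b := by
  obtain ⟨n, hn, h⟩ := h
  exact ⟨n, by positivity, by simpa only [zpow_natCast] using h⟩

theorem ZPowRelated.symm (h : ZPowRelated a b) : ZPowRelated b a :=
  let ⟨n, hn, h⟩ := h; ⟨n, hn, h.symm⟩

theorem zPowRelated_inv_right_iff : ZPowRelated a b⁻¹ ↔ ZPowRelated a b := by
  have key : ∀ {a b : G}, ZPowRelated a b⁻¹ → ZPowRelated a b := by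
    rintro a b ⟨n, hn, h⟩
    refine ⟨-n, neg_ne_zero.2 hn, ?_⟩
    rwa [zpow_neg, zpow_neg, ← inv_eq_iff_eq_inv, ← inv_zpow]
  exact ⟨key, fun h => key (by rwa [inv_inv])⟩

theorem zPowRelated_inv_left_iff : ZPowRelated a⁻¹ b ↔ ZPowRelated a b :=
  ⟨fun h => (zPowRelated_inv_right_iff.1 h.symm).symm,
    fun h => (zPowRelated_inv_right_iff.2 h.symm).symm⟩

end PowerRelations

section Components

variable {G : Type*} [Group G] {a b c x : G}

theorem nPowerGraph_le_zpmPowerGraph : nPowerGraph G ≤ zpmPowerGraph G :=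
  fun _ _ h => ⟨h.1, PowRelated.zPowRelated h.2⟩

theorem PowRelated.reachable (h : PowRelated a b) : (nPowerGraph G).Reachable a b := by
  obtain rfl | hadj := powRelated_iff_eq_or_adj.1 h
  exacts [.refl a, hadj.reachable]

theorem nPowerGraph_reachable_inv (h : (nPowerGraph G).Reachable a b) :
    (nPowerGraph G).Reachable a⁻¹ b⁻¹ :=
  h.map (⟨(·⁻¹), fun hab => ⟨inv_injective.ne hab.1, PowRelated.inv hab.2⟩⟩ :
    nPowerGraph G →g nPowerGraph G)

theorem zpmPowerGraph_reachable_inv (a : G) : (zpmPowerGraph G).Reachable a a⁻¹ := by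
  by_cases h : a = a⁻¹
  · exact h ▸ .refl a
  · exact Adj.reachable ⟨h, -1, by norm_num, .inl (zpow_neg_one a).symm⟩

theorem exists_pow_eq_pow_of_reachable (h : (nPowerGraph G).Reachable a b) :
    ∃ m n : ℕ, 0 < m ∧ 0 < n ∧ a ^ m = b ^ n := by
  rw [reachable_iff_reflTransGen] at h
  induction h with
  | refl => exact ⟨1, 1, one_pos, one_pos, rfl⟩
  | tail _ hbc ih =>
    obtain ⟨m, n, hm, hn, hab⟩ := ih
    obtain ⟨k, hk, rfl | rfl⟩ := hbc.2
    · exact ⟨m * k, n, by positivity, hn, by rw [pow_mul, hab, ← pow_mul, ← pow_mul, mul_comm]⟩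
    · exact ⟨m, k * n, hm, by positivity, by rw [hab, pow_mul]⟩

theorem isOfFinOrder_of_reachable_inv (h : (nPowerGraph G).Reachable a a⁻¹) : IsOfFinOrder a := by
  obtain ⟨m, n, hm, -, hmn⟩ := exists_pow_eq_pow_of_reachable h
  refine isOfFinOrder_iff_pow_eq_one.2 ⟨m + n, by omega, ?_⟩
  rw [pow_add, hmn, inv_pow, inv_mul_cancel]

theorem not_reachable_inv_of_reachable (hx : ¬IsOfFinOrder x)
    (ha : (nPowerGraph G).Reachable a x) : ¬(nPowerGraph G).Reachable a⁻¹ x :=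
  fun ha' => hx (isOfFinOrder_of_reachable_inv (ha'.symm.trans (nPowerGraph_reachable_inv ha)))

theorem ZPowRelated.powRelated_or_powRelated_inv (h : ZPowRelated a b) :
    PowRelated a b ∨ PowRelated a b⁻¹ := by
  obtain ⟨n, hn, h⟩ := h
  have hk : 0 < n.natAbs := Int.natAbs_pos.2 hn
  rcases Int.natAbs_eq n with hn' | hn' <;> rw [hn'] at h
  · exact .inl ⟨n.natAbs, hk, by simpa only [zpow_natCast] using h⟩
  · refine .inr ⟨n.natAbs, hk, ?_⟩
    rwa [inv_eq_iff_eq_inv, inv_pow, ← zpow_natCast, ← zpow_natCast, ← zpow_neg, ← zpow_neg]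

theorem reachable_or_reachable_inv_of_zPowRelated (hb : (nPowerGraph G).Reachable b x)
    (h : ZPowRelated b c) : (nPowerGraph G).Reachable c x ∨ (nPowerGraph G).Reachable c⁻¹ x :=
  h.powRelated_or_powRelated_inv.imp (fun h => h.reachable.symm.trans hb)
    (fun h => h.reachable.symm.trans hb)

theorem zpmPowerGraph_reachable_iff :
    (zpmPowerGraph G).Reachable a x ↔
      (nPowerGraph G).Reachable a x ∨ (nPowerGraph G).Reachable a⁻¹ x := by
  refine ⟨fun h => ?_, ?_⟩
  · rw [reachable_iff_reflTransGen] at h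
    induction h using Relation.ReflTransGen.head_induction_on with
    | refl => exact .inl (.refl x)
    | head hab _ ih =>
      obtain hb | hb := ih
      · exact reachable_or_reachable_inv_of_zPowRelated hb (ZPowRelated.symm hab.2)
      · exact reachable_or_reachable_inv_of_zPowRelated hb
          (zPowRelated_inv_left_iff.2 (ZPowRelated.symm hab.2))
  · rintro (h | h)
    · exact h.mono nPowerGraph_le_zpmPowerGraph
    · exact (zpmPowerGraph_reachable_inv a).trans (h.mono nPowerGraph_le_zpmPowerGraph)

end Components

section SignedInv

variable {G : Type*} [Group G] {a b x : G} {i j : Fin 2}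

def signedInv (i : Fin 2) (a : G) : G := if i = 0 then a else a⁻¹

theorem zPowRelated_signedInv_iff :
    ZPowRelated (signedInv i a) (signedInv j b) ↔ ZPowRelated a b := by
  fin_cases i <;> fin_cases j <;>
    simp [signedInv, zPowRelated_inv_left_iff, zPowRelated_inv_right_iff]

theorem zpmPowerGraph_reachable_signedInv (ha : (nPowerGraph G).Reachable a x) (i : Fin 2) :
    (zpmPowerGraph G).Reachable (signedInv i a) x := by
  rw [zpmPowerGraph_reachable_iff]
  fin_cases i
  · exact .inl ha
  · exact .inr (by simpa [signedInv] using ha)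

variable (hx : ¬IsOfFinOrder x) (ha : (nPowerGraph G).Reachable a x)
  (hb : (nPowerGraph G).Reachable b x)
include hx ha hb

theorem signedInv_eq_signedInv_iff : signedInv i a = signedInv j b ↔ a = b ∧ i = j := by
  fin_cases i <;> fin_cases j <;> simp [signedInv]
  · exact fun h => not_reachable_inv_of_reachable hx hb (h ▸ ha)
  · exact fun h => not_reachable_inv_of_reachable hx ha (h ▸ hb)

theorem powRelated_of_zPowRelated (h : ZPowRelated a b) : PowRelated a b :=
  h.powRelated_or_powRelated_inv.resolve_right
    fun h => not_reachable_inv_of_reachable hx hb (h.reachable.symm.trans ha)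

theorem zpmPowerGraph_adj_signedInv_iff :
    (zpmPowerGraph G).Adj (signedInv i a) (signedInv j b) ↔ (a, i) ≠ (b, j) ∧ PowRelated a b := by
  rw [zpmPowerGraph_adj_iff, zPowRelated_signedInv_iff, Ne, signedInv_eq_signedInv_iff hx ha hb,
    Ne, Prod.ext_iff]
  exact and_congr_right fun _ => ⟨powRelated_of_zPowRelated hx ha hb, PowRelated.zPowRelated⟩

end SignedInv

theorem strongProd_top_adj_iff {α β : Type*} {Γ : SimpleGraph α} {p q : α × β} :
    (strongProd Γ ⊤).Adj p q ↔ p ≠ q ∧ (p.1 = q.1 ∨ Γ.Adj p.1 q.1) := by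
  obtain ⟨a, i⟩ := p
  obtain ⟨b, j⟩ := q
  by_cases hab : a = b
  · subst hab
    simp [strongProd]
  · by_cases hij : i = j <;> simp [strongProd, hab, hij]

theorem SimpleGraph.mem_supp_connectedComponentMk_iff {V : Type*} {Γ : SimpleGraph V} {u v : V} :
    u ∈ (Γ.connectedComponentMk v).supp ↔ Γ.Reachable u v := by
  rw [ConnectedComponent.mem_supp_iff, ConnectedComponent.eq]

/-- Let `Φ` be the connected component of the Z±-power graph containing an element `x` of
infinite order, and `Ψ` the connected component of the N-power graph containing `x`. Then
`Φ ≅ Ψ ⊠ P₂`, where `P₂` is the complete graph on two vertices. -/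
theorem zpm_component_iso_strongProd {G : Type*} [Group G] (x : G)
    (hx : ¬ IsOfFinOrder x) :
    Nonempty
      ((zpmPowerGraph G).induce ((zpmPowerGraph G).connectedComponentMk x).supp ≃g
        strongProd ((nPowerGraph G).induce ((nPowerGraph G).connectedComponentMk x).supp)
          (⊤ : SimpleGraph (Fin 2))) := by
  let f : ((nPowerGraph G).connectedComponentMk x).supp × Fin 2 →
      ((zpmPowerGraph G).connectedComponentMk x).supp := fun p =>
    ⟨signedInv p.2 p.1, mem_supp_connectedComponentMk_iff.2 <|
      zpmPowerGraph_reachable_signedInv (mem_supp_connectedComponentMk_iff.1 p.1.2) p.2⟩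
  have hf : f.Bijective := by
    refine ⟨?_, ?_⟩
    · rintro ⟨⟨a, ha⟩, i⟩ ⟨⟨b, hb⟩, j⟩ h
      rw [mem_supp_connectedComponentMk_iff] at ha hb
      obtain ⟨rfl, rfl⟩ := (signedInv_eq_signedInv_iff hx ha hb).1 (congrArg Subtype.val h)
      rfl
    · rintro ⟨u, hu⟩
      rcases zpmPowerGraph_reachable_iff.1 (mem_supp_connectedComponentMk_iff.1 hu) with h | h
      · exact ⟨(⟨u, mem_supp_connectedComponentMk_iff.2 h⟩, 0), rfl⟩
      · exact ⟨(⟨u⁻¹, mem_supp_connectedComponentMk_iff.2 h⟩, 1), Subtype.ext (inv_inv u)⟩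
  refine ⟨(⟨Equiv.ofBijective f hf, ?_⟩ : _ ≃g _).symm⟩
  rintro ⟨⟨a, ha⟩, i⟩ ⟨⟨b, hb⟩, j⟩
  rw [mem_supp_connectedComponentMk_iff] at ha hb
  simp [f, strongProd_top_adj_iff, zpmPowerGraph_adj_signedInv_iff hx ha hb,
    powRelated_iff_eq_or_adj]
end

section
/- Let G be a torsion-free group and let x, y ∈ G with x ∉ {y, y⁻¹}. If y = x^n for some nonzero integer n (i.e. x → y in the directed Z±-power graph), then the set S_G(y,x), consisting of the vertices lying in the closed neighborhood of x but not in the closed neighborhood of y in 𝒢±(G), is infinite. -/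
set_option linter.unusedVariables false

/-- A monoid is torsion-free if every non-identity element has infinite order
(the definition of `Monoid.IsTorsionFree` in the older Mathlib). -/
def Monoid.IsTorsionFree (G : Type*) [Monoid G] : Prop :=
  ∀ g : G, g ≠ 1 → ¬IsOfFinOrder g

/-! If `y = x ^ n`, the powers `x ^ e` with `|e| > |n|` and `n ∤ e` are all neighbours of `x` but not
of `y`: such a power is not a power of `y` since `n ∤ e`, and `y` is not a power of it since
its exponent is too large. In a torsion-free group these powers are pairwise distinct, and there
are infinitely many such `e` as soon as `|n| ≥ 2`, which `x ∉ {y, y⁻¹}` forces. -/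

theorem Int.infinite_setOf_not_dvd_and_abs_lt {n : ℤ} (hn : 1 < |n|) :
    {e : ℤ | ¬n ∣ e ∧ |n| < |e|}.Infinite := by
  refine Set.infinite_of_injective_forall_mem (f := fun m : ℕ => (m + 1) * |n| + 1)
    (fun p q hpq => ?_) fun m => ⟨fun hdvd => ?_, ?_⟩
  · have := mul_right_cancel₀ (by positivity) (add_right_cancel hpq)
    omega
  · have h1 : n ∣ 1 := (dvd_add_right (Dvd.dvd.mul_left (self_dvd_abs n) _)).mp hdvd
    have := Int.le_of_dvd one_pos ((abs_dvd n 1).mpr h1)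
    omega
  · have hpos : 0 < ((m : ℤ) + 1) * |n| + 1 := by positivity
    rw [abs_of_pos hpos]
    nlinarith [abs_nonneg n]

theorem zpow_mem_closedNbhd_zpmPowerGraph {G : Type*} [Group G] (x : G) {e : ℤ} (he : e ≠ 0) :
    x ^ e ∈ closedNbhd (zpmPowerGraph G) x := by
  by_cases hxe : x = x ^ e
  · exact hxe ▸ Set.mem_insert x _
  · exact Set.mem_insert_of_mem _ ⟨hxe, e, he, Or.inl rfl⟩

theorem zpow_notMem_closedNbhd_zpmPowerGraph_zpow {G : Type*} [Group G] {x : G}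
    (hx : ¬IsOfFinOrder x) {n e : ℤ} (hdvd : ¬n ∣ e) (hlt : |n| < |e|) :
    x ^ e ∉ closedNbhd (zpmPowerGraph G) (x ^ n) := by
  have hinj : Function.Injective (x ^ · : ℤ → G) := injective_zpow_iff_not_isOfFinOrder.mpr hx
  rintro (heq | ⟨-, k, hk, heq | heq⟩)
  · exact hdvd (hinj heq ▸ dvd_rfl)
  · rw [← zpow_mul] at heq
    exact hdvd ⟨k, hinj heq⟩
  · rw [← zpow_mul] at heq
    have hnk : |n| = |e| * |k| := by rw [hinj heq, abs_mul]
    nlinarith [Int.one_le_abs hk, abs_nonneg e]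

/-- In a torsion-free group, if `x ∉ {y, y⁻¹}` and `y = x ^ n` for some nonzero integer `n`,
then the set of vertices lying in the closed neighborhood of `x` but not in the closed
neighborhood of `y` in the Z±-power graph is infinite. -/
theorem S_infinite_of_dir {G : Type*} [Group G] (hG : Monoid.IsTorsionFree G)
    (x y : G) (hxy : x ≠ y ∧ x ≠ y⁻¹) (h : ∃ n : ℤ, n ≠ 0 ∧ y = x ^ n) :
    (closedNbhd (zpmPowerGraph G) x \ closedNbhd (zpmPowerGraph G) y).Infinite := by
  obtain ⟨n, hn0, rfl⟩ := h
  have hx : ¬IsOfFinOrder x := hG x fun hx1 => hxy.1 (by simp [hx1])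
  have hn : 1 < |n| := by
    have hn1 : n ≠ 1 := by rintro rfl; exact hxy.1 (zpow_one x).symm
    have hnm1 : n ≠ -1 := by rintro rfl; exact hxy.2 (by simp)
    rw [lt_abs]
    omega
  refine ((Int.infinite_setOf_not_dvd_and_abs_lt hn).image
    (injective_zpow_iff_not_isOfFinOrder.mpr hx).injOn).mono ?_
  rintro _ ⟨e, ⟨hdvd, hlt⟩, rfl⟩
  exact ⟨zpow_mem_closedNbhd_zpmPowerGraph x fun he => hdvd (he ▸ dvd_zero n),
    zpow_notMem_closedNbhd_zpmPowerGraph_zpow hx hdvd hlt⟩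
end

section
/- Let G be a torsion-free group and let x be a non-identity element of G. Then O_G(x) is the vertex set of a connected component of the graph obtained by restricting the complement of the Z±-power graph 𝒢±(G) to the set M_G(x). -/
set_option linter.unusedVariables false

/-- `O_G(x)`: the direct successors of `x` in the directed Z±-power graph, excluding `x⁻¹`. -/
def Osucc {G : Type*} [Group G] (x : G) : Set G :=
  {y | y ≠ x ∧ y ≠ x⁻¹ ∧ ∃ n : ℤ, n ≠ 0 ∧ y = x ^ n}

/-- `I_G(x)`: the direct predecessors of `x` in the directed Z±-power graph, excluding `x⁻¹`. -/
def Ipred {G : Type*} [Group G] (x : G) : Set G :=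
  {y | y ≠ x ∧ y ≠ x⁻¹ ∧ ∃ n : ℤ, n ≠ 0 ∧ x = y ^ n}

/-- `M_G(x) = I_G(x) ∪ O_G(x)`: the neighbors of `x` in the Z±-power graph, excluding `x⁻¹`. -/
def Mnbr {G : Type*} [Group G] (x : G) : Set G :=
  Ipred x ∪ Osucc x

/-!
Since `x` has infinite order, `n ↦ x ^ n` is injective, so `O_G(x) = {x ^ n : |n| ≥ 2}` and two
such powers `x ^ a`, `x ^ b` are non-adjacent in the power graph exactly when neither of `a`, `b`
divides the other. Any two of them are thus joined in the complement through `x ^ p` for a prime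
`p` exceeding both exponents. No complement edge leaves `O_G(x)` inside `M_G(x)`: a power `x ^ n`
of `x` is also a power of every `y ∈ I_G(x)`.
-/

namespace SimpleGraph

variable {V : Type*} {H : SimpleGraph V} {S : Set V}

lemma Reachable.mem_of_adj_closed_s12 (hclosed : ∀ ⦃u v⦄, H.Adj u v → u ∈ S → v ∈ S) {u v : V}
    (huv : H.Reachable u v) (hu : u ∈ S) : v ∈ S := by
  obtain ⟨p⟩ := huv
  induction p with
  | nil => exact hu
  | cons h _ ih => exact ih (hclosed h hu)

lemma exists_connectedComponent_supp_eq (hne : S.Nonempty)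
    (hclosed : ∀ ⦃u v⦄, H.Adj u v → u ∈ S → v ∈ S)
    (hreach : ∀ u ∈ S, ∀ v ∈ S, H.Reachable u v) :
    ∃ C : H.ConnectedComponent, C.supp = S := by
  obtain ⟨v, hv⟩ := hne
  refine ⟨H.connectedComponentMk v, Set.ext fun w => ?_⟩
  rw [ConnectedComponent.mem_supp_iff, ConnectedComponent.eq]
  exact ⟨fun hwv => hwv.symm.mem_of_adj_closed_s12 hclosed hv, fun hw => hreach w hw v hv⟩

end SimpleGraph

lemma Int.not_dvd_prime_and_not_prime_dvd {a : ℤ} {p : ℕ} (hp : p.Prime) (ha : 2 ≤ a.natAbs)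
    (hap : a.natAbs < p) : ¬a ∣ p ∧ ¬(p : ℤ) ∣ a := by
  constructor
  · intro h
    rcases hp.eq_one_or_self_of_dvd _ (Int.natAbs_dvd_natAbs.mpr h) with h1 | hself <;> omega
  · intro h
    have := Int.natAbs_le_of_dvd_ne_zero h (by omega)
    omega

lemma Int.exists_incomparable_of_two_le_natAbs {a b : ℤ} (ha : 2 ≤ a.natAbs)
    (hb : 2 ≤ b.natAbs) :
    ∃ c : ℤ, 2 ≤ c.natAbs ∧ (¬a ∣ c ∧ ¬c ∣ a) ∧ (¬b ∣ c ∧ ¬c ∣ b) := by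
  obtain ⟨p, hp_ge, hp⟩ := Nat.exists_infinite_primes (a.natAbs + b.natAbs + 1)
  exact ⟨p, by simpa using hp.two_le, Int.not_dvd_prime_and_not_prime_dvd hp ha (by omega),
    Int.not_dvd_prime_and_not_prime_dvd hp hb (by omega)⟩

section PowerGraph

variable {G : Type*} [Group G] {x : G}

lemma mem_Osucc_iff (hx : ¬IsOfFinOrder x) {y : G} :
    y ∈ Osucc x ↔ ∃ n : ℤ, 2 ≤ n.natAbs ∧ x ^ n = y := by
  have hinj := injective_zpow_iff_not_isOfFinOrder.mpr hx
  constructor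
  · rintro ⟨hy1, hy2, n, hn, rfl⟩
    have h1 : n ≠ 1 := by rintro rfl; exact hy1 (zpow_one x)
    have h2 : n ≠ -1 := by rintro rfl; exact hy2 (zpow_neg_one x)
    exact ⟨n, by omega, rfl⟩
  · rintro ⟨n, hn, rfl⟩
    refine ⟨fun h => ?_, fun h => ?_, n, by omega, rfl⟩
    · have : n = 1 := hinj (h.trans (zpow_one x).symm)
      omega
    · have : n = -1 := hinj (h.trans (zpow_neg_one x).symm)
      omega

lemma compl_zpmPowerGraph_adj_zpow (hx : ¬IsOfFinOrder x) {a b : ℤ} (hab : ¬a ∣ b)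
    (hba : ¬b ∣ a) : (zpmPowerGraph G)ᶜ.Adj (x ^ a) (x ^ b) := by
  have hinj := injective_zpow_iff_not_isOfFinOrder.mpr hx
  refine ⟨fun h => hab (hinj h ▸ dvd_rfl), ?_⟩
  rintro ⟨-, n, -, h | h⟩
  · exact hab ⟨n, hinj (h.trans (zpow_mul x a n).symm)⟩
  · exact hba ⟨n, hinj (h.trans (zpow_mul x b n).symm)⟩

lemma mem_Osucc_of_compl_adj {u w : G} (hu : u ∈ Osucc x) (hw : w ∈ Mnbr x)
    (huw : (zpmPowerGraph G)ᶜ.Adj u w) : w ∈ Osucc x := by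
  rcases hw with ⟨-, -, m, hm, hxw⟩ | hwO
  · obtain ⟨-, -, n, hn, rfl⟩ := hu
    exact absurd ⟨huw.1, m * n, mul_ne_zero hm hn, Or.inr (by rw [zpow_mul, ← hxw])⟩ huw.2
  · exact hwO

lemma reachable_of_mem_Osucc (hx : ¬IsOfFinOrder x) {u v : Mnbr x} (hu : (u : G) ∈ Osucc x)
    (hv : (v : G) ∈ Osucc x) : (((zpmPowerGraph G)ᶜ).induce (Mnbr x)).Reachable u v := by
  obtain ⟨a, ha, hau⟩ := (mem_Osucc_iff hx).mp hu
  obtain ⟨b, hb, hbv⟩ := (mem_Osucc_iff hx).mp hv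
  obtain ⟨c, hc, ⟨hac, hca⟩, hbc, hcb⟩ := Int.exists_incomparable_of_two_le_natAbs ha hb
  let w : Mnbr x := ⟨x ^ c, Or.inr ((mem_Osucc_iff hx).mpr ⟨c, hc, rfl⟩)⟩
  have huw : (((zpmPowerGraph G)ᶜ).induce (Mnbr x)).Adj u w := by
    rw [SimpleGraph.induce_adj, ← hau]
    exact compl_zpmPowerGraph_adj_zpow hx hac hca
  have hwv : (((zpmPowerGraph G)ᶜ).induce (Mnbr x)).Adj w v := by
    rw [SimpleGraph.induce_adj, ← hbv]
    exact compl_zpmPowerGraph_adj_zpow hx hcb hbc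
  exact huw.reachable.trans hwv.reachable

end PowerGraph

/-- For a non-identity element `x` of a torsion-free group, `O_G(x)` is the vertex set of a
connected component of the restriction of the complement of the Z±-power graph to `M_G(x)`. -/
theorem Osucc_is_component_of_complement_on_Mnbr {G : Type*} [Group G]
    (hG : Monoid.IsTorsionFree G) (x : G) (hx : x ≠ 1) :
    ∃ C : (((zpmPowerGraph G)ᶜ).induce (Mnbr x)).ConnectedComponent,
      Subtype.val '' C.supp = Osucc x := by
  have hinf : ¬IsOfFinOrder x := hG x hx
  have hsq : x ^ (2 : ℤ) ∈ Osucc x := (mem_Osucc_iff hinf).mpr ⟨2, le_rfl, rfl⟩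
  obtain ⟨C, hC⟩ := SimpleGraph.exists_connectedComponent_supp_eq
    (H := ((zpmPowerGraph G)ᶜ).induce (Mnbr x)) (S := Subtype.val ⁻¹' Osucc x)
    ⟨⟨x ^ (2 : ℤ), Or.inr hsq⟩, hsq⟩
    (fun u w huw hu => mem_Osucc_of_compl_adj hu w.2 huw)
    (fun u hu v hv => reachable_of_mem_Osucc hinf hu hv)
  refine ⟨C, ?_⟩
  rw [hC, Subtype.image_preimage_coe, Set.inter_eq_right]
  exact Set.subset_union_right
end

section
/- Let a ∈ ℚ \ {0} and define φ_a : ℚ → ℚ by φ_a(0) = 0 and φ_a(x) = a²/x for x ≠ 0 (all operations in the multiplicative sense applied to the additive group (ℚ,+): here a²/x means the rational number a·a/x). Then φ_a is an automorphism of the Z±-power graph 𝒢±(ℚ,+), and φ_a is an anti-automorphism of the directed Z±-power graph of (ℚ,+) (i.e., x → y iff φ_a(y) → φ_a(x)); moreover, φ_a maps I_ℚ(a) bijectively onto O_ℚ(a), giving an isomorphism from the induced subgraph of 𝒢±(ℚ,+) on I_ℚ(a) to that on O_ℚ(a). -/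
set_option linter.unusedVariables false

/-- The Z±-power graph of the additive group `(ℚ, +)`: distinct `x, y` adjacent iff one is a
nonzero integer multiple of the other. -/
def zpmQ : SimpleGraph ℚ where
  Adj x y := x ≠ y ∧ ∃ n : ℤ, n ≠ 0 ∧ (y = n • x ∨ x = n • y)
  symm := ⟨fun x y ⟨hxy, n, hn, h⟩ => ⟨hxy.symm, n, hn, h.symm⟩⟩
  loopless := ⟨fun x ⟨h, _⟩ => h rfl⟩

/-- The directed Z±-power graph of `(ℚ, +)`: `x → y` iff `x ≠ y` and `y = n • x` for some
nonzero integer `n`. -/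
def dirQ : ℚ → ℚ → Prop :=
  fun x y => x ≠ y ∧ ∃ n : ℤ, n ≠ 0 ∧ y = n • x

/-- `O_ℚ(x)`: direct successors of `x` in the directed Z±-power graph of `(ℚ,+)`, excluding `-x`. -/
def OsuccQ (x : ℚ) : Set ℚ :=
  {y | y ≠ x ∧ y ≠ -x ∧ ∃ n : ℤ, n ≠ 0 ∧ y = n • x}

/-- `I_ℚ(x)`: direct predecessors of `x` in the directed Z±-power graph of `(ℚ,+)`, excluding `-x`. -/
def IpredQ (x : ℚ) : Set ℚ :=
  {y | y ≠ x ∧ y ≠ -x ∧ ∃ n : ℤ, n ≠ 0 ∧ x = n • y}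

/-- The map `φ_a : ℚ → ℚ`, `φ_a(0) = 0` and `φ_a(x) = a²/x` otherwise. -/
noncomputable def phiQ (a : ℚ) : ℚ → ℚ := fun x => if x = 0 then 0 else a ^ 2 / x


/-!
Since `a ^ 2 / 0 = 0` in Lean, `φ_a` is just `x ↦ a² / x`, an involution of `ℚ`. For `n ≠ 0`
the identity `y = n x ↔ a²/x = n · a²/y` (both sides fail or hold together when `x` or `y` is `0`)
says that `φ_a` reverses every arc of the directed graph, hence preserves adjacency in its
symmetrization `𝒢±(ℚ,+)`. As `φ_a` fixes `a` and `-a`, reversing the arcs into `a` turns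
`I_ℚ(a)` into `O_ℚ(a)`, and the automorphism restricts to the induced subgraphs.
-/

theorem div_eq_zsmul_div_iff {K : Type*} [Field K] [CharZero K] {c x y : K} {n : ℤ}
    (hc : c ≠ 0) (hn : n ≠ 0) : c / x = n • (c / y) ↔ y = n • x := by
  have hn' : (n : K) ≠ 0 := Int.cast_ne_zero.mpr hn
  rw [zsmul_eq_mul, zsmul_eq_mul]
  rcases eq_or_ne x 0 with rfl | hx <;> rcases eq_or_ne y 0 with rfl | hy
  · simp
  · simp [hc, hn', hy]
  · simp [hc, hn', hx]
  · field_simp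

theorem zpmQ_adj_iff {x y : ℚ} : zpmQ.Adj x y ↔ dirQ x y ∨ dirQ y x := by
  simp only [zpmQ, dirQ, ne_comm (a := y), ← and_or_left, ← exists_or]

section phiQ

variable {a : ℚ}

theorem phiQ_apply (a x : ℚ) : phiQ a x = a ^ 2 / x := by
  unfold phiQ
  split_ifs with hx <;> simp [hx]

theorem phiQ_self (a : ℚ) : phiQ a a = a := by
  rcases eq_or_ne a 0 with rfl | ha
  · simp [phiQ_apply]
  · rw [phiQ_apply, sq, mul_div_cancel_right₀ a ha]

theorem phiQ_neg_self (a : ℚ) : phiQ a (-a) = -a := by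
  rw [phiQ_apply, div_neg, ← phiQ_apply, phiQ_self]

theorem phiQ_involutive (ha : a ≠ 0) : Function.Involutive (phiQ a) := fun x => by
  simp only [phiQ_apply, div_div_cancel₀ (pow_ne_zero 2 ha)]

theorem phiQ_eq_zsmul_phiQ_iff (ha : a ≠ 0) {x y : ℚ} {n : ℤ} (hn : n ≠ 0) :
    phiQ a x = n • phiQ a y ↔ y = n • x := by
  simp only [phiQ_apply, div_eq_zsmul_div_iff (pow_ne_zero 2 ha) hn]

theorem dirQ_phiQ_iff (ha : a ≠ 0) {x y : ℚ} : dirQ (phiQ a y) (phiQ a x) ↔ dirQ x y := by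
  simp only [dirQ, (phiQ_involutive ha).injective.ne_iff, ne_comm (a := y)]
  exact and_congr_right' <| exists_congr fun n => and_congr_right (phiQ_eq_zsmul_phiQ_iff ha)

theorem zpmQ_adj_phiQ_iff (ha : a ≠ 0) {x y : ℚ} :
    zpmQ.Adj (phiQ a x) (phiQ a y) ↔ zpmQ.Adj x y := by
  rw [zpmQ_adj_iff, zpmQ_adj_iff, dirQ_phiQ_iff ha, dirQ_phiQ_iff ha, or_comm]

noncomputable def phiQIso (ha : a ≠ 0) : zpmQ ≃g zpmQ where
  toEquiv := (phiQ_involutive ha).toPerm _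
  map_rel_iff' := zpmQ_adj_phiQ_iff ha

theorem phiQ_mem_OsuccQ_iff (ha : a ≠ 0) {y : ℚ} : phiQ a y ∈ OsuccQ a ↔ y ∈ IpredQ a := by
  have hinj := (phiQ_involutive ha).injective
  refine and_congr (not_congr (hinj.eq_iff' (phiQ_self a))) <|
    and_congr (not_congr (hinj.eq_iff' (phiQ_neg_self a))) <|
    exists_congr fun n => and_congr_right fun hn => ?_
  simpa only [phiQ_self] using phiQ_eq_zsmul_phiQ_iff ha hn (x := y) (y := a)

theorem phiQ_bijOn_IpredQ_OsuccQ (ha : a ≠ 0) : Set.BijOn (phiQ a) (IpredQ a) (OsuccQ a) := by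
  convert (phiQ_involutive ha).bijective.bijOn_preimage using 1
  ext y
  exact (phiQ_mem_OsuccQ_iff ha).symm

end phiQ

/-- For nonzero `a ∈ ℚ`, `φ_a` is an automorphism of the Z±-power graph of `(ℚ,+)`, an
anti-automorphism of the directed Z±-power graph of `(ℚ,+)`, and maps `I_ℚ(a)` bijectively onto
`O_ℚ(a)` giving an isomorphism of the corresponding induced subgraphs. -/
theorem phiQ_properties (a : ℚ) (ha : a ≠ 0) :
    Function.Bijective (phiQ a) ∧
      (∀ x y : ℚ, zpmQ.Adj x y ↔ zpmQ.Adj (phiQ a x) (phiQ a y)) ∧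
      (∀ x y : ℚ, dirQ x y ↔ dirQ (phiQ a y) (phiQ a x)) ∧
      Set.BijOn (phiQ a) (IpredQ a) (OsuccQ a) ∧
      Nonempty (zpmQ.induce (IpredQ a) ≃g zpmQ.induce (OsuccQ a)) :=
  ⟨(phiQ_involutive ha).bijective, fun _ _ => (zpmQ_adj_phiQ_iff ha).symm,
    fun _ _ => (dirQ_phiQ_iff ha).symm, phiQ_bijOn_IpredQ_OsuccQ ha,
    ⟨(phiQIso ha).induce (phiQ_bijOn_IpredQ_OsuccQ ha)⟩⟩
end

section
/- Let G be a torsion-free group and let x, y, z ∈ G be such that x, y ∈ O_G(z), y = x^n for some nonzero integer n, and y ∉ {x, x⁻¹}. Let H be a group and let φ : G → H be an isomorphism from the Z±-power graph 𝒢±(G) to 𝒢±(H). Then φ(y) = φ(x)^m for some nonzero integer m if and only if φ maps O_G(z) bijectively onto O_H(φ(z)). -/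
set_option linter.unusedVariables false

/-!
In a torsion-free group the identity is the only isolated vertex of `𝒢±`, and `t⁻¹` is the only
neighbour of `t` with the same closed neighbourhood: a prime power `t ^ p` with `p` large is
adjacent to `t` but not to any `t ^ c` with `|c| ≥ 2`. Hence a graph isomorphism `φ` fixes `1`,
commutes with inversion, and maps `M(t) = I(t) ∪ O(t)` onto `M(φ t)`. Again by a large prime,
`φ` maps either all of `O(t)` into `O(φ t)` or all of it into `I(φ t)`, and in the first case
`φ (O(t)) = O(φ t)`. If `φ y` is a power of `φ x`, then `φ` preserves directions at `x`, so
reversal at `z` would force `z ∈ O(x)`. Conversely, if `φ (O(z)) = O(φ z)`, reversal at `x` would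
put the infinite set `φ (O(x))` into `I(φ x) ∩ O(φ z)`, which is finite because the exponents of
its elements divide that of `φ x`.
-/

open SimpleGraph

theorem Nat.Prime.not_dvd_or_dvd_of_natAbs_lt {p : ℕ} (hp : p.Prime) {i : ℤ}
    (hi : 2 ≤ i.natAbs) (hip : i.natAbs < p) : ¬((p : ℤ) ∣ i ∨ i ∣ p) := by
  rintro (h | h)
  · exact absurd (Nat.le_of_dvd (by omega) (Int.natCast_dvd.1 h)) (by omega)
  · rcases hp.eq_one_or_self_of_dvd _ (Int.dvd_natCast.1 h) with h | h <;> omega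

theorem SimpleGraph.Iso.apply_mem_closedNbhd_iff {V W : Type*} {Γ : SimpleGraph V}
    {Γ' : SimpleGraph W} (φ : Γ ≃g Γ') {a b : V} :
    φ b ∈ closedNbhd Γ' (φ a) ↔ b ∈ closedNbhd Γ a := by
  simp [closedNbhd, φ.map_adj_iff]

theorem SimpleGraph.Iso.image_closedNbhd {V W : Type*} {Γ : SimpleGraph V}
    {Γ' : SimpleGraph W} (φ : Γ ≃g Γ') (a : V) :
    φ '' closedNbhd Γ a = closedNbhd Γ' (φ a) := by
  ext w
  obtain ⟨w, rfl⟩ := φ.surjective w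
  rw [φ.injective.mem_set_image, φ.apply_mem_closedNbhd_iff]

section Group

variable {K : Type*} [Group K]

theorem zpow_mem_closedNbhd (a : K) {n : ℤ} (hn : n ≠ 0) :
    a ^ n ∈ closedNbhd (zpmPowerGraph K) a := by
  rcases eq_or_ne (a ^ n) a with h | h
  · rw [h]; exact Set.mem_insert a _
  · exact Set.mem_insert_of_mem _ ⟨h.symm, n, hn, .inl rfl⟩

theorem closedNbhd_inv_subset (a : K) :
    closedNbhd (zpmPowerGraph K) a⁻¹ ⊆ closedNbhd (zpmPowerGraph K) a := by
  rintro w (rfl | ⟨-, n, hn, hw⟩)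
  · simpa using zpow_mem_closedNbhd a (neg_ne_zero.2 one_ne_zero)
  rcases eq_or_ne w a with rfl | hwa
  · exact Set.mem_insert w _
  refine Set.mem_insert_of_mem _ ⟨hwa.symm, -n, neg_ne_zero.2 hn, ?_⟩
  rcases hw with rfl | h
  · exact .inl (inv_zpow' a n)
  · exact .inr (by rw [zpow_neg, ← h, inv_inv])

theorem closedNbhd_inv (a : K) :
    closedNbhd (zpmPowerGraph K) a⁻¹ = closedNbhd (zpmPowerGraph K) a :=
  (closedNbhd_inv_subset a).antisymm (by simpa using closedNbhd_inv_subset a⁻¹)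

theorem mem_Ipred_iff {a w : K} : w ∈ Ipred a ↔ a ∈ Osucc w := by
  simp only [Ipred, Osucc, Set.mem_ofPred_eq, ne_comm (a := w)]
  exact and_congr_right' (and_congr_left' (not_congr inv_eq_iff_eq_inv))

theorem mem_Mnbr_iff {a w : K} : w ∈ Mnbr a ↔ (zpmPowerGraph K).Adj a w ∧ w ≠ a⁻¹ := by
  constructor
  · rintro (⟨hwa, hwa', n, hn, h⟩ | ⟨hwa, hwa', n, hn, h⟩)
    · exact ⟨⟨hwa.symm, n, hn, .inr h⟩, hwa'⟩
    · exact ⟨⟨hwa.symm, n, hn, .inl h⟩, hwa'⟩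
  · rintro ⟨⟨haw, n, hn, h | h⟩, hwa'⟩
    · exact .inr ⟨haw.symm, hwa', n, hn, h⟩
    · exact .inl ⟨haw.symm, hwa', n, hn, h⟩

theorem exists_zpow_of_mem_Osucc {t y : K} (h : y ∈ Osucc t) :
    ∃ k : ℤ, 2 ≤ k.natAbs ∧ y = t ^ k := by
  obtain ⟨hyt, hyt', k, hk, rfl⟩ := h
  have hk1 : k ≠ 1 := by rintro rfl; simp at hyt
  have hk1' : k ≠ -1 := by rintro rfl; simp at hyt'
  exact ⟨k, by omega, rfl⟩

theorem ne_one_of_mem_Osucc {t y : K} (h : y ∈ Osucc t) : t ≠ 1 := by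
  rintro rfl
  obtain ⟨hy, -, n, -, rfl⟩ := h
  simp at hy

theorem mem_closedNbhd_of_mem_Ipred_of_mem_Osucc {c u v : K} (hu : u ∈ Ipred c)
    (hv : v ∈ Osucc c) : v ∈ closedNbhd (zpmPowerGraph K) u := by
  obtain ⟨-, -, s, hs, rfl⟩ := hu
  obtain ⟨-, -, e, he, rfl⟩ := hv
  rw [← zpow_mul]
  exact zpow_mem_closedNbhd u (mul_ne_zero hs he)

end Group

namespace Monoid.IsTorsionFree

variable {G H K : Type*} [Group G] [Group H] [Group K]

theorem zpow_injective (hK : IsTorsionFree K) {t : K} (ht : t ≠ 1) :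
    Function.Injective (t ^ · : ℤ → K) :=
  injective_zpow_iff_not_isOfFinOrder.2 (hK t ht)

theorem not_adj_one (hK : IsTorsionFree K) (w : K) : ¬(zpmPowerGraph K).Adj 1 w := by
  rintro ⟨h1w, n, hn, h | h⟩
  · exact h1w (by simpa using h.symm)
  · exact hK w (Ne.symm h1w) (isOfFinOrder_iff_zpow_eq_one.2 ⟨n, hn, h.symm⟩)

theorem ne_one_of_adj (hK : IsTorsionFree K) {v w : K} (h : (zpmPowerGraph K).Adj v w) :
    v ≠ 1 := by
  rintro rfl
  exact hK.not_adj_one w h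

theorem zpow_mem_Osucc (hK : IsTorsionFree K) {t : K} (ht : t ≠ 1) {k : ℤ}
    (hk : 2 ≤ k.natAbs) : t ^ k ∈ Osucc t := by
  refine ⟨fun h => ?_, fun h => ?_, k, by omega, rfl⟩
  · have := hK.zpow_injective ht (show t ^ k = t ^ (1 : ℤ) by rw [h, zpow_one])
    omega
  · have := hK.zpow_injective ht (show t ^ k = t ^ (-1 : ℤ) by rw [h, zpow_neg_one])
    omega

theorem Osucc_asymm (hK : IsTorsionFree K) {a b : K} (h : a ∈ Osucc b) : b ∉ Osucc a := by
  intro h'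
  obtain ⟨m, hm, rfl⟩ := exists_zpow_of_mem_Osucc h
  obtain ⟨n, hn, hb⟩ := exists_zpow_of_mem_Osucc h'
  rw [← zpow_mul] at hb
  have hmn := congrArg Int.natAbs
    (hK.zpow_injective (ne_one_of_mem_Osucc h) (hb.symm.trans (zpow_one b).symm))
  rw [Int.natAbs_mul, Int.natAbs_one] at hmn
  nlinarith

theorem Osucc_subset_Osucc (hK : IsTorsionFree K) {x z : K} (h : x ∈ Osucc z) :
    Osucc x ⊆ Osucc z := by
  obtain ⟨a, ha, rfl⟩ := exists_zpow_of_mem_Osucc h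
  intro y hy
  obtain ⟨n, hn, rfl⟩ := exists_zpow_of_mem_Osucc hy
  rw [← zpow_mul]
  exact hK.zpow_mem_Osucc (ne_one_of_mem_Osucc h) (by rw [Int.natAbs_mul]; nlinarith)

theorem Osucc_infinite (hK : IsTorsionFree K) {t : K} (ht : t ≠ 1) : (Osucc t).Infinite :=
  Set.infinite_of_injective_forall_mem (f := fun k : ℕ => t ^ ((k : ℤ) + 2))
    (fun k l h => by have := hK.zpow_injective ht h; omega)
    (fun k => hK.zpow_mem_Osucc ht (by omega))

theorem Ipred_inter_Osucc_finite (hK : IsTorsionFree K) {a b : K} (h : a ∈ Osucc b) :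
    (Ipred a ∩ Osucc b).Finite := by
  obtain ⟨c, hc, rfl⟩ := exists_zpow_of_mem_Osucc h
  refine ((Int.divisors c).finite_toSet.image (b ^ ·)).subset ?_
  rintro w ⟨⟨-, -, s, -, hs⟩, hwb⟩
  obtain ⟨j, -, rfl⟩ := exists_zpow_of_mem_Osucc hwb
  rw [← zpow_mul] at hs
  exact ⟨j, Int.mem_divisors.2 ⟨⟨s, hK.zpow_injective (ne_one_of_mem_Osucc h) hs⟩, by omega⟩, rfl⟩

theorem dvd_or_dvd_of_zpow_mem_closedNbhd (hK : IsTorsionFree K) {t : K} (ht : t ≠ 1)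
    {i j : ℤ} (h : t ^ j ∈ closedNbhd (zpmPowerGraph K) (t ^ i)) : i ∣ j ∨ j ∣ i := by
  rcases h with h | ⟨-, n, -, h | h⟩
  · exact .inl (hK.zpow_injective ht h ▸ dvd_rfl)
  · rw [← zpow_mul] at h
    exact .inl ⟨n, hK.zpow_injective ht h⟩
  · rw [← zpow_mul] at h
    exact .inr ⟨n, hK.zpow_injective ht h⟩

theorem eq_one_or_eq_neg_one_of_closedNbhd_zpow_eq (hK : IsTorsionFree K) {t : K} (ht : t ≠ 1)
    {c : ℤ} (hc : c ≠ 0)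
    (h : closedNbhd (zpmPowerGraph K) (t ^ c) = closedNbhd (zpmPowerGraph K) t) :
    c = 1 ∨ c = -1 := by
  by_contra hc1
  obtain ⟨p, hpc, hp⟩ := Nat.exists_infinite_primes (c.natAbs + 1)
  have hmem : t ^ (p : ℤ) ∈ closedNbhd (zpmPowerGraph K) (t ^ c) :=
    h ▸ zpow_mem_closedNbhd t (by exact_mod_cast hp.ne_zero)
  exact hp.not_dvd_or_dvd_of_natAbs_lt (by omega) (by omega)
    (hK.dvd_or_dvd_of_zpow_mem_closedNbhd ht hmem).symm

theorem eq_inv_of_adj_of_closedNbhd_eq (hK : IsTorsionFree K) {a b : K}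
    (hab : (zpmPowerGraph K).Adj a b)
    (h : closedNbhd (zpmPowerGraph K) a = closedNbhd (zpmPowerGraph K) b) : b = a⁻¹ := by
  have ha := hK.ne_one_of_adj hab
  have hb := hK.ne_one_of_adj hab.symm
  obtain ⟨hne, c, hc, rfl | rfl⟩ := hab
  · rcases hK.eq_one_or_eq_neg_one_of_closedNbhd_zpow_eq ha hc h.symm with rfl | rfl
    · simp at hne
    · exact zpow_neg_one a
  · rcases hK.eq_one_or_eq_neg_one_of_closedNbhd_zpow_eq hb hc h with rfl | rfl
    · simp at hne
    · simp

theorem apply_one (hG : IsTorsionFree G) (φ : zpmPowerGraph G ≃g zpmPowerGraph H) :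
    φ 1 = 1 := by
  by_contra h
  have hadj : (zpmPowerGraph H).Adj (φ 1) (φ 1 ^ (2 : ℤ)) :=
    ⟨fun h' => h (left_eq_mul.1 (h'.trans (zpow_two _))), 2, two_ne_zero, .inl rfl⟩
  obtain ⟨w, hw⟩ := φ.surjective (φ 1 ^ (2 : ℤ))
  rw [← hw] at hadj
  exact hG.not_adj_one w (φ.map_adj_iff.1 hadj)

theorem of_iso (hG : IsTorsionFree G) (φ : zpmPowerGraph G ≃g zpmPowerGraph H) :
    IsTorsionFree H := by
  intro h hh hfin
  obtain ⟨n, hn, hpow⟩ := isOfFinOrder_iff_zpow_eq_one.1 hfin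
  have hadj : (zpmPowerGraph H).Adj h (φ 1) := by
    rw [hG.apply_one φ]
    exact ⟨hh, n, hn, .inl hpow.symm⟩
  obtain ⟨g, rfl⟩ := φ.surjective h
  exact hG.not_adj_one g (φ.map_adj_iff.1 hadj).symm

theorem apply_inv (hG : IsTorsionFree G) (hH : IsTorsionFree H)
    (φ : zpmPowerGraph G ≃g zpmPowerGraph H) (v : G) : φ v⁻¹ = (φ v)⁻¹ := by
  rcases eq_or_ne v 1 with rfl | hv
  · simp [hG.apply_one φ]
  have hvv : v ≠ v⁻¹ := fun h =>
    hG v hv (isOfFinOrder_iff_zpow_eq_one.2 ⟨2, two_ne_zero, by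
      rw [zpow_two]; exact mul_eq_one_iff_eq_inv.2 h⟩)
  have hadj : (zpmPowerGraph G).Adj v v⁻¹ := ⟨hvv, -1, by norm_num, .inl (zpow_neg_one v).symm⟩
  refine hH.eq_inv_of_adj_of_closedNbhd_eq (φ.map_adj_iff.2 hadj) ?_
  rw [← φ.image_closedNbhd, ← φ.image_closedNbhd, closedNbhd_inv]

theorem apply_mem_Mnbr_iff (hG : IsTorsionFree G) (hH : IsTorsionFree H)
    (φ : zpmPowerGraph G ≃g zpmPowerGraph H) {a w : G} : φ w ∈ Mnbr (φ a) ↔ w ∈ Mnbr a := by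
  rw [mem_Mnbr_iff, mem_Mnbr_iff, φ.map_adj_iff, ← hG.apply_inv hH φ, φ.injective.ne_iff]

theorem image_Osucc_subset_or (hG : IsTorsionFree G) (hH : IsTorsionFree H)
    (φ : zpmPowerGraph G ≃g zpmPowerGraph H) (t : G) :
    φ '' Osucc t ⊆ Osucc (φ t) ∨ φ '' Osucc t ⊆ Ipred (φ t) := by
  have hMnbr : ∀ y ∈ Osucc t, φ y ∈ Ipred (φ t) ∨ φ y ∈ Osucc (φ t) :=
    fun y hy => (hG.apply_mem_Mnbr_iff hH φ).2 (.inr hy)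
  have hcomparable : ∀ i j : ℤ, t ^ i ∈ Osucc t → φ (t ^ i) ∈ Ipred (φ t) →
      φ (t ^ j) ∈ Osucc (φ t) → i ∣ j ∨ j ∣ i := fun i j hi hI hO =>
    hG.dvd_or_dvd_of_zpow_mem_closedNbhd (ne_one_of_mem_Osucc hi)
      (φ.apply_mem_closedNbhd_iff.1 (mem_closedNbhd_of_mem_Ipred_of_mem_Osucc hI hO))
  by_contra! h
  simp only [Set.image_subset_iff, Set.not_subset] at h
  obtain ⟨⟨y, hy, hyO⟩, ⟨y', hy', hy'I⟩⟩ := h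
  obtain ⟨i, hi, rfl⟩ := exists_zpow_of_mem_Osucc hy
  obtain ⟨j, hj, rfl⟩ := exists_zpow_of_mem_Osucc hy'
  obtain ⟨p, hpij, hp⟩ := Nat.exists_infinite_primes (i.natAbs + j.natAbs + 1)
  have htp := hG.zpow_mem_Osucc (ne_one_of_mem_Osucc hy) (k := p) (by have := hp.two_le; omega)
  rcases hMnbr _ htp with hI | hO
  · exact hp.not_dvd_or_dvd_of_natAbs_lt hj (by omega)
      (hcomparable p j htp hI ((hMnbr _ hy').resolve_left hy'I))
  · exact hp.not_dvd_or_dvd_of_natAbs_lt hi (by omega)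
      (hcomparable i p hy ((hMnbr _ hy).resolve_right hyO) hO).symm

theorem image_Osucc_eq_of_subset (hG : IsTorsionFree G) (hH : IsTorsionFree H)
    (φ : zpmPowerGraph G ≃g zpmPowerGraph H) {t : G} (h : φ '' Osucc t ⊆ Osucc (φ t)) :
    φ '' Osucc t = Osucc (φ t) := by
  refine h.antisymm fun w hw => ?_
  have ht : t ≠ 1 := by
    rintro rfl
    exact ne_one_of_mem_Osucc hw (hG.apply_one φ)
  rcases hH.image_Osucc_subset_or hG φ.symm (φ t) with hsymm | hsymm
  · rw [φ.symm_apply_apply] at hsymm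
    exact ⟨φ.symm w, hsymm ⟨w, hw, rfl⟩, φ.apply_symm_apply w⟩
  · have ht2 := hG.zpow_mem_Osucc ht (k := 2) (by norm_num)
    have hrev := hsymm ⟨φ (t ^ (2 : ℤ)), h ⟨_, ht2, rfl⟩, φ.symm_apply_apply _⟩
    rw [φ.symm_apply_apply] at hrev
    exact absurd (mem_Ipred_iff.1 hrev) (hG.Osucc_asymm ht2)

theorem image_Osucc_eq_or_subset_Ipred (hG : IsTorsionFree G) (hH : IsTorsionFree H)
    (φ : zpmPowerGraph G ≃g zpmPowerGraph H) (t : G) :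
    φ '' Osucc t = Osucc (φ t) ∨ φ '' Osucc t ⊆ Ipred (φ t) :=
  (hG.image_Osucc_subset_or hH φ t).imp_left (hG.image_Osucc_eq_of_subset hH φ)

end Monoid.IsTorsionFree

theorem dir_preserved_iff_Osucc_image_general {G H : Type*} [Group G] [Group H]
    (hG : Monoid.IsTorsionFree G) (x y z : G)
    (hx : x ∈ Osucc z)
    (hxy : ∃ n : ℤ, n ≠ 0 ∧ y = x ^ n) (hne : y ≠ x ∧ y ≠ x⁻¹)
    (φ : zpmPowerGraph G ≃g zpmPowerGraph H) :
    (∃ m : ℤ, m ≠ 0 ∧ φ y = (φ x) ^ m) ↔ φ '' Osucc z = Osucc (φ z) := by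
  have hH := hG.of_iso φ
  have hyx : y ∈ Osucc x := ⟨hne.1, hne.2, hxy⟩
  constructor
  · rintro ⟨m, hm, hφy⟩
    have hφyx : φ y ∈ Osucc (φ x) :=
      ⟨φ.injective.ne hne.1, hG.apply_inv hH φ x ▸ φ.injective.ne hne.2, m, hm, hφy⟩
    refine (hG.image_Osucc_eq_or_subset_Ipred hH φ z).resolve_right fun hrev => ?_
    have hφzx : φ z ∈ Osucc (φ x) := mem_Ipred_iff.1 (hrev ⟨x, hx, rfl⟩)
    rcases hG.image_Osucc_eq_or_subset_Ipred hH φ x with hx' | hx'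
    · rw [← hx', φ.injective.mem_set_image] at hφzx
      exact hG.Osucc_asymm hx hφzx
    · exact hH.Osucc_asymm hφyx (mem_Ipred_iff.1 (hx' ⟨y, hyx, rfl⟩))
  · intro hz
    rcases hG.image_Osucc_eq_or_subset_Ipred hH φ x with hx' | hx'
    · obtain ⟨-, -, hm⟩ : φ y ∈ Osucc (φ x) := hx' ▸ ⟨y, hyx, rfl⟩
      exact hm
    · exfalso
      have hφx : φ x ∈ Osucc (φ z) := hz ▸ ⟨x, hx, rfl⟩
      have hinf := (hG.Osucc_infinite (ne_one_of_mem_Osucc hyx)).image φ.injective.injOn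
      refine (hH.Ipred_inter_Osucc_finite hφx).not_infinite (hinf.mono ?_)
      exact Set.subset_inter hx' (hz ▸ Set.image_mono (hG.Osucc_subset_Osucc hx))

/-- Let `G` be torsion-free, `x, y ∈ O_G(z)` with `y` a nonzero power of `x` and `y ∉ {x, x⁻¹}`,
and let `φ` be an isomorphism of the Z±-power graphs of `G` and `H`. Then `φ y` is a nonzero
power of `φ x` iff `φ` maps `O_G(z)` onto `O_H(φ z)`. -/
theorem dir_preserved_iff_Osucc_image {G H : Type*} [Group G] [Group H]
    (hG : Monoid.IsTorsionFree G) (x y z : G)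
    (hx : x ∈ Osucc z) (hy : y ∈ Osucc z)
    (hxy : ∃ n : ℤ, n ≠ 0 ∧ y = x ^ n) (hne : y ≠ x ∧ y ≠ x⁻¹)
    (φ : zpmPowerGraph G ≃g zpmPowerGraph H) :
    (∃ m : ℤ, m ≠ 0 ∧ φ y = (φ x) ^ m) ↔ φ '' Osucc z = Osucc (φ z) :=
  dir_preserved_iff_Osucc_image_general hG x y z hx hxy hne φ
end

section
/- Let G be a group whose Z±-power graph 𝒢±(G) is isomorphic to the Z±-power graph of the additive group (ℚ,+). Then every isomorphism from 𝒢±(G) to 𝒢±(ℚ,+) is either an isomorphism or an anti-isomorphism from the directed Z±-power graph of G to the directed Z±-power graph of (ℚ,+); in particular, the directed Z±-power graphs of G and (ℚ,+) are isomorphic. -/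
set_option linter.unusedVariables false

/-- The directed Z±-power graph, as a relation: `x → y` iff `x ≠ y` and `y` is a nonzero
integer power of `x`. -/
def dirZpm (G : Type*) [Group G] : G → G → Prop :=
  fun x y => x ≠ y ∧ ∃ n : ℤ, n ≠ 0 ∧ y = x ^ n

/-!
Transport the direction of the power relation of `G` along `φ` to a relation `R` on `ℚ`. It
orients every edge of `𝒢±(ℚ)`, is transitive up to returning to the start, and relates `x` and
`-x` both ways: `a` and `a⁻¹` are twins in `𝒢±(G)`, and the only adjacent twins in `𝒢±(ℚ)` are
`x` and `-x`. Such an `R` has no path `u → v → w` between points neither of which is a multiple of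
the other, so the edges `x — k • x` and `x — m • x`, and the edges `x — k • x = m • y — y`, are
oriented alike whenever `k` and `m` are incomparable under divisibility. A large prime is
incomparable with any two multipliers and any two nonzero rationals have a common multiple, so all
edges `x — k • x` with `|k| ≥ 2` point the same way: towards the multiples, or away from them.
-/

theorem Int.exists_not_dvd_and_not_dvd {k m : ℤ} (hk : 2 ≤ k.natAbs) (hm : 2 ≤ m.natAbs) :
    ∃ p : ℤ, ¬ k ∣ p ∧ ¬ p ∣ k ∧ ¬ m ∣ p ∧ ¬ p ∣ m := by
  obtain ⟨p, hle, hp⟩ := Nat.exists_infinite_primes (max k.natAbs m.natAbs + 1)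
  have incomparable {n : ℤ} (hn : 2 ≤ n.natAbs) (hnp : n.natAbs < p) :
      ¬ n ∣ p ∧ ¬ (p : ℤ) ∣ n := by
    refine ⟨fun h => ?_, fun h => ?_⟩
    · rcases hp.eq_one_or_self_of_dvd _ (Int.natAbs_dvd_natAbs.mpr h) with h | h <;> omega
    · have := Int.natAbs_le_of_dvd_ne_zero h (by omega)
      omega
  obtain ⟨hkp, hpk⟩ := incomparable hk (by omega)
  obtain ⟨hmp, hpm⟩ := incomparable hm (by omega)
  exact ⟨p, hkp, hpk, hmp, hpm⟩

theorem zpmQ_not_adj_zero (y : ℚ) : ¬ zpmQ.Adj 0 y := by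
  rintro ⟨hne, n, hn, h | h⟩
  · exact hne (h.trans (smul_zero n)).symm
  · exact hne ((smul_eq_zero.mp h.symm).resolve_left hn).symm

theorem ne_zero_of_zpmQ_adj {x y : ℚ} (h : zpmQ.Adj x y) : y ≠ 0 := by
  rintro rfl
  exact zpmQ_not_adj_zero x h.symm

theorem zpmQ_adj_zsmul_of_not_dvd {x : ℚ} (hx : x ≠ 0) {k m : ℤ} (hkm : ¬ k ∣ m) (hmk : ¬ m ∣ k) :
    zpmQ.Adj x (m • x) := by
  refine ⟨fun h => ?_, m, fun h => hkm (h ▸ dvd_zero k), .inl rfl⟩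
  have : m = 1 := smul_left_injective ℤ hx (h.symm.trans (one_smul ℤ x).symm)
  exact hmk (this ▸ one_dvd k)

theorem dvd_or_dvd_of_zsmul_multiple {x : ℚ} (hx : x ≠ 0) {k m : ℤ}
    (h : ∃ n : ℤ, m • x = n • k • x ∨ k • x = n • m • x) : k ∣ m ∨ m ∣ k := by
  obtain ⟨n, h | h⟩ := h <;> rw [smul_smul] at h
  · exact .inl ⟨n, by rw [smul_left_injective ℤ hx h, mul_comm]⟩
  · exact .inr ⟨n, by rw [smul_left_injective ℤ hx h, mul_comm]⟩

theorem dvd_or_dvd_of_zsmul_eq_zsmul {x y : ℚ} {k m : ℤ} (he : k • x = m • y) (hr : k • x ≠ 0)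
    (h : ∃ n : ℤ, y = n • x ∨ x = n • y) : m ∣ k ∨ k ∣ m := by
  have hx : x ≠ 0 := by rintro rfl; exact hr (smul_zero k)
  have hy : y ≠ 0 := by rintro rfl; exact hr (he.trans (smul_zero m))
  obtain ⟨n, rfl | rfl⟩ := h <;> rw [smul_smul] at he
  · exact .inl ⟨n, smul_left_injective ℤ hx he⟩
  · exact .inr ⟨n, (smul_left_injective ℤ hy he).symm⟩

theorem exists_zsmul_eq_zsmul {x y : ℚ} (hx : x ≠ 0) (hy : y ≠ 0) :
    ∃ k m : ℤ, 2 ≤ k.natAbs ∧ 2 ≤ m.natAbs ∧ k • x = m • y := by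
  have hnum : (x / y).num ≠ 0 := Rat.num_ne_zero.mpr (div_ne_zero hx hy)
  have hden := (x / y).den_ne_zero
  refine ⟨2 * (x / y).den, 2 * (x / y).num, by omega, by omega, ?_⟩
  rw [zsmul_eq_mul, zsmul_eq_mul, Int.cast_mul, Int.cast_mul, ← Rat.mul_den_eq_num]
  field_simp
  push_cast
  ring

theorem not_zpmQ_twins_zsmul {x : ℚ} (hx : x ≠ 0) {n : ℤ} (hn : 2 ≤ n.natAbs)
    (htw : ∀ w, w ≠ x → w ≠ n • x → (zpmQ.Adj x w ↔ zpmQ.Adj (n • x) w)) : False := by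
  obtain ⟨p, hnp, hpn, -, -⟩ := Int.exists_not_dvd_and_not_dvd hn hn
  have hadj := zpmQ_adj_zsmul_of_not_dvd hx hnp hpn
  have hpx : p • x ≠ n • x := fun h => hnp (smul_left_injective ℤ hx h ▸ dvd_refl n)
  obtain ⟨-, c, -, hc⟩ := (htw _ hadj.ne.symm hpx).mp hadj
  rcases dvd_or_dvd_of_zsmul_multiple hx ⟨c, hc⟩ with hd | hd
  exacts [hnp hd, hpn hd]

theorem eq_neg_of_zpmQ_twins {x y : ℚ} (hxy : zpmQ.Adj x y)
    (htw : ∀ w, w ≠ x → w ≠ y → (zpmQ.Adj x w ↔ zpmQ.Adj y w)) : y = -x := by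
  have hx : x ≠ 0 := ne_zero_of_zpmQ_adj hxy.symm
  have hy : y ≠ 0 := ne_zero_of_zpmQ_adj hxy
  obtain ⟨hne, n, hn, rfl | rfl⟩ := hxy <;>
    rcases (show n = 1 ∨ n = -1 ∨ 2 ≤ n.natAbs by omega) with rfl | rfl | hn2
  · simp at hne
  · simp
  · exact (not_zpmQ_twins_zsmul hx hn2 htw).elim
  · simp at hne
  · simp
  · exact (not_zpmQ_twins_zsmul hy hn2 fun w h₁ h₂ => (htw w h₂ h₁).symm).elim

structure IsZpmQOrientation (R : ℚ → ℚ → Prop) : Prop where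
  adj {x y : ℚ} : R x y → zpmQ.Adj x y
  total {x y : ℚ} : zpmQ.Adj x y → R x y ∨ R y x
  trans {x y z : ℚ} : R x y → R y z → x = z ∨ R x z
  neg_self {x : ℚ} : x ≠ 0 → R x (-x)

namespace IsZpmQOrientation

variable {R : ℚ → ℚ → Prop}

theorem swap (hR : IsZpmQOrientation R) : IsZpmQOrientation fun x y => R y x where
  adj h := (hR.adj h).symm
  total h := hR.total h.symm
  trans h₁ h₂ := (hR.trans h₂ h₁).imp Eq.symm id
  neg_self hx := by simpa using hR.neg_self (neg_ne_zero.mpr hx)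

theorem exists_multiple_of_path (hR : IsZpmQOrientation R) {u v w : ℚ} (h₁ : R u v)
    (h₂ : R v w) : ∃ n : ℤ, w = n • u ∨ u = n • w := by
  rcases hR.trans h₁ h₂ with rfl | h
  · exact ⟨1, .inl (one_smul ℤ u).symm⟩
  · obtain ⟨-, n, -, hn⟩ := hR.adj h
    exact ⟨n, hn⟩

theorem zsmul_of_zsmul (hR : IsZpmQOrientation R) {x : ℚ} (hx : x ≠ 0) {k m : ℤ}
    (hkm : ¬ k ∣ m) (hmk : ¬ m ∣ k) (h : R x (k • x)) : R x (m • x) := by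
  refine (hR.total (zpmQ_adj_zsmul_of_not_dvd hx hkm hmk)).resolve_right fun h' => ?_
  rcases dvd_or_dvd_of_zsmul_multiple hx (hR.exists_multiple_of_path h' h) with hd | hd
  exacts [hmk hd, hkm hd]

theorem zsmul_of_zsmul_eq (hR : IsZpmQOrientation R) {x y : ℚ} {k m : ℤ} (hkm : ¬ k ∣ m)
    (hmk : ¬ m ∣ k) (he : k • x = m • y) (h : R x (k • x)) : R y (m • y) := by
  have hr : k • x ≠ 0 := ne_zero_of_zpmQ_adj (hR.adj h)
  have hy : y ≠ 0 := by rintro rfl; exact hr (he.trans (smul_zero m))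
  refine (hR.total (zpmQ_adj_zsmul_of_not_dvd hy hkm hmk)).resolve_right fun h' => ?_
  rw [← he] at h'
  rcases dvd_or_dvd_of_zsmul_eq_zsmul he hr (hR.exists_multiple_of_path h h') with hd | hd
  exacts [hmk hd, hkm hd]

theorem zsmul_iff_zsmul (hR : IsZpmQOrientation R) {x : ℚ} (hx : x ≠ 0) {k m : ℤ}
    (hk : 2 ≤ k.natAbs) (hm : 2 ≤ m.natAbs) : R x (k • x) ↔ R x (m • x) := by
  obtain ⟨p, hkp, hpk, hmp, hpm⟩ := Int.exists_not_dvd_and_not_dvd hk hm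
  exact ⟨fun h => hR.zsmul_of_zsmul hx hpm hmp (hR.zsmul_of_zsmul hx hkp hpk h),
    fun h => hR.zsmul_of_zsmul hx hpk hkp (hR.zsmul_of_zsmul hx hmp hpm h)⟩

theorem zsmul_iff_of_zsmul_eq (hR : IsZpmQOrientation R) {x y : ℚ} {k m : ℤ}
    (hk : 2 ≤ k.natAbs) (hm : 2 ≤ m.natAbs) (he : k • x = m • y) :
    R x (k • x) ↔ R y (m • y) := by
  obtain ⟨p, hkp, hpk, hmp, hpm⟩ := Int.exists_not_dvd_and_not_dvd hk hm
  have hp : (p : ℚ) ≠ 0 := Int.cast_ne_zero.mpr fun h => hkp (h ▸ dvd_zero k)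
  obtain ⟨z, hz⟩ : ∃ z : ℚ, p • z = k • x :=
    ⟨(p : ℚ)⁻¹ * (k • x), by rw [zsmul_eq_mul, ← mul_assoc, mul_inv_cancel₀ hp, one_mul]⟩
  exact ⟨fun h => hR.zsmul_of_zsmul_eq hpm hmp (hz.trans he)
      (hR.zsmul_of_zsmul_eq hkp hpk hz.symm h),
    fun h => hR.zsmul_of_zsmul_eq hpk hkp hz
      (hR.zsmul_of_zsmul_eq hmp hpm (hz.trans he).symm h)⟩

theorem zsmul_iff (hR : IsZpmQOrientation R) {x y : ℚ} (hx : x ≠ 0) (hy : y ≠ 0) {k m : ℤ}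
    (hk : 2 ≤ k.natAbs) (hm : 2 ≤ m.natAbs) : R x (k • x) ↔ R y (m • y) := by
  obtain ⟨a, b, ha, hb, hab⟩ := exists_zsmul_eq_zsmul hx hy
  calc R x (k • x) ↔ R x (a • x) := hR.zsmul_iff_zsmul hx hk ha
    _ ↔ R y (b • y) := hR.zsmul_iff_of_zsmul_eq ha hb hab
    _ ↔ R y (m • y) := hR.zsmul_iff_zsmul hy hb hm

theorem not_zsmul_of_zsmul (hR : IsZpmQOrientation R) {x : ℚ} (hx : x ≠ 0) {k : ℤ}
    (hk : 2 ≤ k.natAbs) (h : R x (k • x)) : ¬ R (k • x) x := by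
  intro h'
  obtain ⟨p, hkp, hpk, -, -⟩ := Int.exists_not_dvd_and_not_dvd hk hk
  have hpath := hR.exists_multiple_of_path h' (hR.zsmul_of_zsmul hx hkp hpk h)
  rcases dvd_or_dvd_of_zsmul_multiple hx hpath with hd | hd
  exacts [hkp hd, hpk hd]

theorem iff_dirQ_of_one_two (hR : IsZpmQOrientation R) (h12 : R 1 2) (x y : ℚ) :
    R x y ↔ dirQ x y := by
  have up {x : ℚ} (hx : x ≠ 0) {k : ℤ} (hk : 2 ≤ k.natAbs) : R x (k • x) :=
    (hR.zsmul_iff one_ne_zero hx (k := 2) (by norm_num) hk).mp (by simpa using h12)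
  constructor
  · intro h
    obtain ⟨hne, n, hn, hyx | rfl⟩ := hR.adj h
    · exact ⟨hne, n, hn, hyx⟩
    have hy : y ≠ 0 := ne_zero_of_zpmQ_adj (hR.adj h)
    rcases (show n = 1 ∨ n = -1 ∨ 2 ≤ n.natAbs by omega) with rfl | rfl | hn2
    · simp at hne
    · exact ⟨hne, -1, by norm_num, by simp⟩
    · exact (hR.not_zsmul_of_zsmul hy hn2 (up hy hn2) h).elim
  · rintro ⟨hne, n, hn, rfl⟩
    have hx : x ≠ 0 := by rintro rfl; simp at hne
    rcases (show n = 1 ∨ n = -1 ∨ 2 ≤ n.natAbs by omega) with rfl | rfl | hn2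
    · simp at hne
    · simpa using hR.neg_self hx
    · exact up hx hn2

theorem forall_iff_dirQ_or (hR : IsZpmQOrientation R) :
    (∀ x y, R x y ↔ dirQ x y) ∨ (∀ x y, R x y ↔ dirQ y x) := by
  by_cases h12 : R 1 2
  · exact .inl (hR.iff_dirQ_of_one_two h12)
  · have h21 : R 2 1 :=
      (hR.total ⟨by norm_num, 2, by norm_num, .inl (by norm_num)⟩).resolve_left h12
    exact .inr fun x y => hR.swap.iff_dirQ_of_one_two h21 y x

end IsZpmQOrientation

theorem dirQ_inv_inv_of_dirQ {u v : ℚ} (h : dirQ u v) : dirQ v⁻¹ u⁻¹ := by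
  obtain ⟨hne, n, hn, rfl⟩ := h
  refine ⟨fun h => hne (inv_injective h).symm, n, hn, ?_⟩
  rw [zsmul_eq_mul, zsmul_eq_mul, mul_inv, ← mul_assoc,
    mul_inv_cancel₀ (Int.cast_ne_zero.mpr hn), one_mul]

theorem dirQ_inv_inv_iff {u v : ℚ} : dirQ v⁻¹ u⁻¹ ↔ dirQ u v :=
  ⟨fun h => by simpa using dirQ_inv_inv_of_dirQ h, dirQ_inv_inv_of_dirQ⟩

section Group

variable {G : Type*} [Group G]

theorem zpmPowerGraph_adj_iff_dirZpm {a b : G} :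
    (zpmPowerGraph G).Adj a b ↔ dirZpm G a b ∨ dirZpm G b a := by
  constructor
  · rintro ⟨hne, n, hn, h | h⟩
    exacts [.inl ⟨hne, n, hn, h⟩, .inr ⟨hne.symm, n, hn, h⟩]
  · rintro (⟨hne, n, hn, h⟩ | ⟨hne, n, hn, h⟩)
    exacts [⟨hne, n, hn, .inl h⟩, ⟨hne.symm, n, hn, .inr h⟩]

theorem dirZpm_trans {a b c : G} (hab : dirZpm G a b) (hbc : dirZpm G b c) :
    a = c ∨ dirZpm G a c := by
  obtain ⟨-, n, hn, rfl⟩ := hab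
  obtain ⟨-, m, hm, rfl⟩ := hbc
  exact or_iff_not_imp_left.mpr fun h => ⟨h, n * m, mul_ne_zero hn hm, (zpow_mul a n m).symm⟩

theorem zpmPowerGraph_adj_zpow_two {a : G} (ha : a ≠ 1) :
    (zpmPowerGraph G).Adj a (a ^ (2 : ℤ)) :=
  ⟨fun h => ha (mul_eq_left.mp ((zpow_two a).symm.trans h.symm)), 2, two_ne_zero, .inl rfl⟩

theorem zpmPowerGraph_adj_inv_of_adj {a c : G} (h : (zpmPowerGraph G).Adj a c) (hc : c ≠ a⁻¹) :
    (zpmPowerGraph G).Adj a⁻¹ c := by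
  obtain ⟨-, n, hn, h | h⟩ := h
  · exact ⟨hc.symm, -n, neg_ne_zero.mpr hn, .inl (by rw [h, inv_zpow, zpow_neg, inv_inv])⟩
  · exact ⟨hc.symm, -n, neg_ne_zero.mpr hn, .inr (by rw [zpow_neg, ← h])⟩

end Group

namespace ZpmQIso

variable {G : Type*} [Group G]

theorem map_one (φ : zpmPowerGraph G ≃g zpmQ) : φ 1 = 0 := by
  have h : φ.symm 0 = 1 := by
    by_contra ha
    have := φ.map_adj_iff.mpr (zpmPowerGraph_adj_zpow_two ha)
    rw [φ.apply_symm_apply] at this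
    exact zpmQ_not_adj_zero _ this
  rw [← h, φ.apply_symm_apply]

theorem eq_one_of_zpow_eq_one (φ : zpmPowerGraph G ≃g zpmQ) {g : G} {n : ℤ} (hn : n ≠ 0)
    (h : g ^ n = 1) : g = 1 := by
  by_contra hg
  have := φ.map_adj_iff.mpr (⟨hg, n, hn, .inl h.symm⟩ : (zpmPowerGraph G).Adj g 1)
  rw [map_one φ] at this
  exact zpmQ_not_adj_zero _ this.symm

theorem inv_ne_self (φ : zpmPowerGraph G ≃g zpmQ) {a : G} (ha : a ≠ 1) : a⁻¹ ≠ a := fun h =>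
  ha (eq_one_of_zpow_eq_one φ two_ne_zero (by rw [zpow_two]; exact inv_eq_iff_mul_eq_one.mp h))

theorem map_inv (φ : zpmPowerGraph G ≃g zpmQ) (a : G) : φ a⁻¹ = -φ a := by
  rcases eq_or_ne a 1 with rfl | ha
  · simp [map_one φ]
  have hadj : (zpmPowerGraph G).Adj a a⁻¹ :=
    ⟨(inv_ne_self φ ha).symm, -1, by norm_num, .inl (zpow_neg_one a).symm⟩
  refine eq_neg_of_zpmQ_twins (φ.map_adj_iff.mpr hadj) fun w hw hw' => ?_
  obtain ⟨c, rfl⟩ := φ.surjective w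
  rw [φ.map_adj_iff, φ.map_adj_iff]
  have hca : c ≠ a := fun h => hw (h ▸ rfl)
  have hca' : c ≠ a⁻¹ := fun h => hw' (h ▸ rfl)
  exact ⟨fun h => zpmPowerGraph_adj_inv_of_adj h hca',
    fun h => by simpa using zpmPowerGraph_adj_inv_of_adj h (by simpa using hca)⟩

theorem isZpmQOrientation (φ : zpmPowerGraph G ≃g zpmQ) :
    IsZpmQOrientation fun x y => dirZpm G (φ.symm x) (φ.symm y) where
  adj h := φ.symm.map_adj_iff.mp (zpmPowerGraph_adj_iff_dirZpm.mpr (.inl h))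
  total h := zpmPowerGraph_adj_iff_dirZpm.mp (φ.symm.map_adj_iff.mpr h)
  trans h₁ h₂ := (dirZpm_trans h₁ h₂).imp_left fun h => φ.symm.injective h
  neg_self {x} hx := by
    have ha : φ.symm x ≠ 1 := fun h => hx (by rw [← φ.apply_symm_apply x, h, map_one φ])
    have hneg : φ.symm (-x) = (φ.symm x)⁻¹ :=
      φ.injective (by rw [map_inv, φ.apply_symm_apply, φ.apply_symm_apply])
    rw [hneg]
    exact ⟨(inv_ne_self φ ha).symm, -1, by norm_num, (zpow_neg_one _).symm⟩

theorem dirZpm_iff_or (φ : zpmPowerGraph G ≃g zpmQ) :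
    (∀ a b : G, dirZpm G a b ↔ dirQ (φ a) (φ b)) ∨
      (∀ a b : G, dirZpm G a b ↔ dirQ (φ b) (φ a)) := by
  refine (isZpmQOrientation φ).forall_iff_dirQ_or.imp ?_ ?_ <;> intro h a b <;>
    simpa only [φ.symm_apply_apply] using h (φ a) (φ b)

end ZpmQIso

/-- If the Z±-power graph of a group `G` is isomorphic to that of `(ℚ,+)`, then every such
isomorphism is an isomorphism or an anti-isomorphism of the directed Z±-power graphs; in
particular the directed Z±-power graphs of `G` and `(ℚ,+)` are isomorphic. -/
theorem zpm_iso_rat_directed {G : Type*} [Group G]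
    (h : Nonempty (zpmPowerGraph G ≃g zpmQ)) :
    (∀ φ : zpmPowerGraph G ≃g zpmQ,
      (∀ x y : G, dirZpm G x y ↔ dirQ (φ x) (φ y)) ∨
      (∀ x y : G, dirZpm G x y ↔ dirQ (φ y) (φ x))) ∧
    Nonempty (dirZpm G ≃r dirQ) := by
  refine ⟨ZpmQIso.dirZpm_iff_or, ?_⟩
  obtain ⟨φ⟩ := h
  rcases ZpmQIso.dirZpm_iff_or φ with hφ | hφ
  · exact ⟨⟨φ.toEquiv, fun {a b} => (hφ a b).symm⟩⟩
  · exact ⟨⟨φ.toEquiv.trans (Equiv.inv ℚ), fun {a b} => dirQ_inv_inv_iff.trans (hφ a b).symm⟩⟩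
end
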